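/- Let p be an odd prime and m, r positive integers with p ∤ m, and set a = ⟨-r/m⟩_p, the least nonnegative residue of -r·m^{-1} mod p. Then, coefficientwise in x, ∑_{k=0}^{p-1} (q^r;q^m)_k (q^{m-r};q^m)_k x^k / (q^m;q^m)_k^2 ≡ ∑_{k=0}^{a} qbinom(a,k;q^m)^2 q^{m·k(k-1)/2 - m·k·a} (-x)^k (x;q^m)_{a-k} (mod [p]). -/

import Mathlib

open Polynomial Finset

/-- The variable `q` as an element of the field of rational functions over `ℚ`. -/
noncomputable def q : RatFunc ℚ := RatFunc.X

/-- The q-shifted factorial `(a; Q)_n = (1-a)(1-aQ)⋯(1-aQ^{n-1})`. -/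
noncomputable def qPoch (a Q : RatFunc ℚ) (n : ℕ) : RatFunc ℚ :=
  ∏ i ∈ Finset.range n, (1 - a * Q ^ i)

/-- The q-integer `[p] = 1 + q + ⋯ + q^{p-1}`. -/
noncomputable def qInt (p : ℕ) : RatFunc ℚ := ∑ i ∈ Finset.range p, q ^ i

/-- The Gaussian binomial coefficient in base `Q`. -/
noncomputable def qBinom (n k : ℕ) (Q : RatFunc ℚ) : RatFunc ℚ :=
  qPoch (Q ^ (n - k + 1)) Q k / qPoch Q Q k

/-- `ModQ r p A B` : the difference `A - B` lies in the ideal generated by `[p]^r`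
in the localization of `ℚ[q]` at the irreducible polynomial `[p]`;
concretely `(A - B) * b = [p]^r * a` for polynomials `a b` with `[p] ∤ b`. -/
def ModQ (r p : ℕ) (A B : RatFunc ℚ) : Prop :=
  ∃ a b : Polynomial ℚ, ¬ ((∑ i ∈ Finset.range p, Polynomial.X ^ i) ∣ b) ∧
    (A - B) * algebraMap (Polynomial ℚ) (RatFunc ℚ) b =
      qInt p ^ r * algebraMap (Polynomial ℚ) (RatFunc ℚ) a

/-!
Both coefficients are rational functions of `q` whose denominators are products of factors
`1 - q^(m i)` with `0 < i < p`, so they are regular at a primitive `p`-th root of unity `ζ`; since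
`[p]` is the irreducible `p`-th cyclotomic polynomial, the congruence says that they take the same
value at `ζ`. Put `Z = ζ^m`, again a primitive `p`-th root of unity. As `p ∣ r + m a`, we have
`ζ^r = Z^(-a)` and `ζ^(m-r) = Z^(a+1)`, so the `j`-th coefficient on the left becomes
`(Z^(-a);Z)_j (Z^(a+1);Z)_j / (Z;Z)_j^2 = (-1)^j Z^(C(j,2) - a j) [a,j]_Z [a+j,j]_Z`.
On the right, the `q`-binomial theorem expands `(x;q^m)_(a-k)`; after
`[a,k] [a-k,j-k] = [a,j] [j,k]` the sum over `k` collapses, by `q`-Chu–Vandermonde, to the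
same value.
-/

-- Unlike `qBinom`, defined by the `q`-Pascal rule, so that it makes sense in any commutative ring,
-- in particular at roots of unity.
noncomputable def gaussBinom {R : Type*} [CommRing R] (w : R) : ℕ → ℕ → R
  | _, 0 => 1
  | 0, _ + 1 => 0
  | n + 1, k + 1 => gaussBinom w n (k + 1) + w ^ (n - k) * gaussBinom w n k

def qFactorial {R : Type*} [CommRing R] (w : R) (k : ℕ) : R :=
  ∏ i ∈ range k, (1 - w ^ (i + 1))

section CommRing

variable {R S : Type*} [CommRing R] [CommRing S] (w : R)

@[simp] lemma gaussBinom_zero_right (n : ℕ) : gaussBinom w n 0 = 1 := by cases n <;> rfl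

lemma gaussBinom_succ_succ (n k : ℕ) :
    gaussBinom w (n + 1) (k + 1) = gaussBinom w n (k + 1) + w ^ (n - k) * gaussBinom w n k :=
  rfl

lemma gaussBinom_eq_zero_of_lt {n k : ℕ} (h : n < k) : gaussBinom w n k = 0 := by
  induction n generalizing k with
  | zero => obtain ⟨k, rfl⟩ := Nat.exists_eq_succ_of_ne_zero h.ne'; rfl
  | succ n ih =>
    obtain ⟨k, rfl⟩ := Nat.exists_eq_succ_of_ne_zero (Nat.ne_zero_of_lt h)
    rw [gaussBinom_succ_succ, ih (by omega), ih (by omega), mul_zero, add_zero]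

lemma map_gaussBinom (f : R →+* S) (n k : ℕ) : f (gaussBinom w n k) = gaussBinom (f w) n k := by
  induction n generalizing k with
  | zero => cases k <;> simp [gaussBinom]
  | succ n ih => cases k <;> simp [gaussBinom, ih]

/-- The `q`-binomial theorem. -/
lemma coeff_prod_one_sub_C_pow_mul_X (n t : ℕ) :
    (∏ i ∈ range n, (1 - C (w ^ i) * X)).coeff t
      = (-1) ^ t * w ^ t.choose 2 * gaussBinom w n t := by
  induction n generalizing t with
  | zero => cases t <;> simp [coeff_one, gaussBinom]
  | succ n ih =>
    rw [prod_range_succ, mul_sub, mul_one, mul_left_comm, coeff_sub, coeff_C_mul, ih]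
    cases t with
    | zero => simp
    | succ t =>
      rw [coeff_mul_X, ih, gaussBinom_succ_succ]
      rcases le_or_gt t n with h | h
      · have hpow : w ^ (t + 1).choose 2 * w ^ (n - t) = w ^ n * w ^ t.choose 2 := by
          rw [← pow_add, ← pow_add, Nat.choose_succ_succ' t 1, Nat.choose_one_right,
            one_add_one_eq_two]
          congr 1
          omega
        linear_combination (-(-1 : R) ^ (t + 1) * gaussBinom w n t) * hpow
      · rw [gaussBinom_eq_zero_of_lt w h, gaussBinom_eq_zero_of_lt w (by omega)]
        ring

lemma gaussBinom_mul_qFactorial (n k : ℕ) :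
    gaussBinom w n k * qFactorial w k = ∏ i ∈ range k, (1 - w ^ (n - i)) := by
  induction n generalizing k with
  | zero =>
    cases k with
    | zero => simp [qFactorial]
    | succ k => simp [gaussBinom]
  | succ n ih =>
    cases k with
    | zero => simp [qFactorial]
    | succ k =>
      have hshift : ∏ i ∈ range (k + 1), (1 - w ^ (n + 1 - i))
          = (∏ i ∈ range k, (1 - w ^ (n - i))) * (1 - w ^ (n + 1)) := by
        rw [prod_range_succ']
        simp only [Nat.add_sub_add_right, Nat.sub_zero]
      -- for `n < k` both sides vanish because of the factor `1 - w ^ (n - n)`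
      have hvanish : (∏ i ∈ range k, (1 - w ^ (n - i))) * w ^ (n - k + (k + 1))
          = (∏ i ∈ range k, (1 - w ^ (n - i))) * w ^ (n + 1) := by
        rcases le_or_gt k n with h | h
        · rw [show n - k + (k + 1) = n + 1 by omega]
        · rw [prod_eq_zero (mem_range.2 h) (by simp), zero_mul, zero_mul]
      have hk1 := ih (k + 1)
      rw [qFactorial, prod_range_succ, ← qFactorial, prod_range_succ] at hk1
      rw [gaussBinom_succ_succ, qFactorial, prod_range_succ, ← qFactorial, hshift]
      linear_combination hk1 + w ^ (n - k) * (1 - w ^ (k + 1)) * ih k - hvanish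

lemma prod_one_sub_pow_mul_pow {n k : ℕ} (hk : k ≤ n) :
    ∏ i ∈ range k, (1 - w ^ (n - k + 1) * w ^ i) = gaussBinom w n k * qFactorial w k := by
  rw [gaussBinom_mul_qFactorial, ← prod_range_reflect]
  refine prod_congr rfl fun i hi => ?_
  have hi := mem_range.1 hi
  rw [← pow_add, show n - k + 1 + (k - 1 - i) = n - i by omega]

lemma qFactorial_mul_prod {j k : ℕ} (hk : k ≤ j) :
    qFactorial w (j - k) * ∏ i ∈ range k, (1 - w ^ (j - i)) = qFactorial w j := by
  rw [qFactorial, qFactorial, ← prod_range_reflect _ k]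
  conv_rhs => rw [← Nat.sub_add_cancel hk, prod_range_add]
  refine congrArg _ (prod_congr rfl fun i hi => ?_)
  have hi := mem_range.1 hi
  rw [show j - (k - 1 - i) = j - k + i + 1 by omega]

-- Identities between Gaussian binomials are proved at `w = X` in `ℤ[X]`, where `q`-factorials
-- can be cancelled, and then specialised.
local notation "𝕏" => (X : ℤ[X])

lemma qFactorial_X_ne_zero (k : ℕ) : qFactorial 𝕏 k ≠ 0 :=
  prod_ne_zero_iff.2 fun i _ h => by simpa using congrArg natDegree (sub_eq_zero.1 h)

lemma eval₂_gaussBinom_X (n k : ℕ) :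
    (gaussBinom 𝕏 n k).eval₂ (Int.castRingHom R) w = gaussBinom w n k := by
  simpa using map_gaussBinom X (eval₂RingHom (Int.castRingHom R) w) n k

lemma gaussBinom_sub_right {n k : ℕ} (hk : k ≤ n) :
    gaussBinom w n (n - k) = gaussBinom w n k := by
  suffices h : gaussBinom 𝕏 n (n - k) = gaussBinom 𝕏 n k by
    simpa [eval₂_gaussBinom_X] using congrArg (eval₂ (Int.castRingHom R) w) h
  refine mul_right_cancel₀
    (mul_ne_zero (qFactorial_X_ne_zero k) (qFactorial_X_ne_zero (n - k))) ?_
  calc gaussBinom 𝕏 n (n - k) * (qFactorial 𝕏 k * qFactorial 𝕏 (n - k))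
      = qFactorial 𝕏 (n - (n - k)) * (gaussBinom 𝕏 n (n - k) * qFactorial 𝕏 (n - k)) := by
        rw [Nat.sub_sub_self hk]; ring
    _ = qFactorial 𝕏 (n - k) * ∏ i ∈ range k, (1 - 𝕏 ^ (n - i)) := by
        rw [gaussBinom_mul_qFactorial, qFactorial_mul_prod _ (Nat.sub_le n k),
          qFactorial_mul_prod _ hk]
    _ = gaussBinom 𝕏 n k * (qFactorial 𝕏 k * qFactorial 𝕏 (n - k)) := by
        rw [← gaussBinom_mul_qFactorial]; ring

lemma gaussBinom_mul_gaussBinom_sub {a j k : ℕ} (hk : k ≤ j) :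
    gaussBinom w a k * gaussBinom w (a - k) (j - k) = gaussBinom w a j * gaussBinom w j k := by
  suffices h : gaussBinom 𝕏 a k * gaussBinom 𝕏 (a - k) (j - k)
      = gaussBinom 𝕏 a j * gaussBinom 𝕏 j k by
    simpa [eval₂_gaussBinom_X] using congrArg (eval₂ (Int.castRingHom R) w) h
  refine mul_right_cancel₀
    (mul_ne_zero (qFactorial_X_ne_zero k) (qFactorial_X_ne_zero (j - k))) ?_
  calc gaussBinom 𝕏 a k * gaussBinom 𝕏 (a - k) (j - k) *
        (qFactorial 𝕏 k * qFactorial 𝕏 (j - k))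
      = (gaussBinom 𝕏 a k * qFactorial 𝕏 k) *
          (gaussBinom 𝕏 (a - k) (j - k) * qFactorial 𝕏 (j - k)) := by ring
    _ = ∏ i ∈ range j, (1 - 𝕏 ^ (a - i)) := by
        simp only [gaussBinom_mul_qFactorial, Nat.sub_sub]
        rw [← prod_range_add, Nat.add_sub_cancel' hk]
    _ = gaussBinom 𝕏 a j * (qFactorial 𝕏 (j - k) * ∏ i ∈ range k, (1 - 𝕏 ^ (j - i))) := by
        rw [qFactorial_mul_prod _ hk, gaussBinom_mul_qFactorial]
    _ = gaussBinom 𝕏 a j * gaussBinom 𝕏 j k * (qFactorial 𝕏 k * qFactorial 𝕏 (j - k)) := by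
        rw [← gaussBinom_mul_qFactorial]; ring

/-- The `q`-Chu–Vandermonde identity. -/
lemma sum_gaussBinom_mul_gaussBinom (m n r : ℕ) :
    ∑ k ∈ range (r + 1), gaussBinom w m k * gaussBinom w n (r - k) * w ^ ((m - k) * (r - k))
      = gaussBinom w (m + n) r := by
  induction n generalizing r with
  | zero =>
    rw [sum_eq_single_of_mem r (self_mem_range_succ r) fun k hk hkr => by
      rw [gaussBinom_eq_zero_of_lt w (n := 0) (k := r - k) (by have := mem_range.1 hk; omega),
        mul_zero, zero_mul]]
    simp
  | succ n ih =>
    cases r with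
    | zero => simp
    | succ r =>
      have hterm : ∀ k ∈ range (r + 1),
          gaussBinom w m k * gaussBinom w (n + 1) (r + 1 - k) * w ^ ((m - k) * (r + 1 - k))
            = gaussBinom w m k * gaussBinom w n (r + 1 - k) * w ^ ((m - k) * (r + 1 - k))
              + w ^ (m + n - r) * (gaussBinom w m k * gaussBinom w n (r - k)
                * w ^ ((m - k) * (r - k))) := by
        intro k hk
        have hkr : r + 1 - k = r - k + 1 := by have := mem_range.1 hk; omega
        rw [hkr, gaussBinom_succ_succ]
        rcases le_or_gt k m with hkm | hkm
        · rcases le_or_gt (r - k) n with hrn | hrn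
          · have hexp : n - (r - k) + (m - k) * (r - k + 1) = m + n - r + (m - k) * (r - k) := by
              rw [mul_add_one]
              generalize (m - k) * (r - k) = t
              omega
            have hpow : w ^ (n - (r - k)) * w ^ ((m - k) * (r - k + 1))
                = w ^ (m + n - r) * w ^ ((m - k) * (r - k)) := by
              rw [← pow_add, ← pow_add, hexp]
            linear_combination gaussBinom w m k * gaussBinom w n (r - k) * hpow
          · rw [gaussBinom_eq_zero_of_lt w hrn,
              gaussBinom_eq_zero_of_lt w (show n < r - k + 1 by omega)]
            ring
        · rw [gaussBinom_eq_zero_of_lt w hkm]; ring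
      rw [← add_assoc, gaussBinom_succ_succ, ← ih, ← ih, sum_range_succ, sum_congr rfl hterm,
        sum_add_distrib, mul_sum, sum_range_succ _ (r + 1)]
      simp only [tsub_self, gaussBinom_zero_right]
      ring

lemma prod_one_sub_mul_pow (k : ℕ) :
    ∏ i ∈ range k, (1 - w * w ^ i) = qFactorial w k := by
  simp only [qFactorial, pow_succ']

lemma coeff_C_mul_neg_X_pow_mul (c : R) (f : R[X]) (k j : ℕ) :
    (C c * (-X) ^ k * f).coeff j = c * (-1) ^ k * (if k ≤ j then f.coeff (j - k) else 0) := by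
  have hsplit : C c * (-X) ^ k * f = C (c * (-1) ^ k) * (f * X ^ k) := by
    rw [neg_pow, C_mul, C_pow, C_neg, C_1]
    ring
  rw [hsplit, coeff_C_mul, coeff_mul_X_pow']

lemma IsPrimitiveRoot.qFactorial_ne_zero [IsDomain R] {Z : R} {p k : ℕ}
    (hZ : IsPrimitiveRoot Z p) (hk : k < p) : qFactorial Z k ≠ 0 :=
  prod_ne_zero_iff.2 fun i hi =>
    sub_ne_zero.2 (hZ.pow_ne_one_of_pos_of_lt i.succ_ne_zero
      (by have := mem_range.1 hi; omega)).symm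

end CommRing

lemma Nat.choose_two_add (s t : ℕ) : (s + t).choose 2 = s.choose 2 + t.choose 2 + s * t := by
  induction t with
  | zero => simp
  | succ t ih =>
    rw [← add_assoc, Nat.choose_succ_succ' _ 1, Nat.choose_succ_succ' t 1, one_add_one_eq_two, ih]
    simp only [Nat.choose_one_right]
    ring

lemma Nat.mul_mul_pred_div_two (m k : ℕ) : m * (k * (k - 1)) / 2 = m * k.choose 2 := by
  rw [Nat.choose_two_right, Nat.mul_div_assoc _ (Nat.even_mul_pred_self k).two_dvd]

section Field

variable {F : Type*} [Field F] {Z : F}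

lemma prod_one_sub_zpow_neg_mul_pow (hZ : Z ≠ 0) (a j : ℕ) :
    ∏ i ∈ range j, (1 - Z ^ (-(a : ℤ)) * Z ^ i)
      = (-1) ^ j * Z ^ ((j.choose 2 : ℤ) - a * j) * (gaussBinom Z a j * qFactorial Z j) := by
  rcases lt_or_ge a j with haj | hja
  · rw [gaussBinom_eq_zero_of_lt Z haj, zero_mul, mul_zero]
    refine prod_eq_zero (mem_range.2 haj) ?_
    rw [zpow_neg, zpow_natCast, inv_mul_cancel₀ (pow_ne_zero a hZ), sub_self]
  · have hfactor : ∀ i ∈ range j, 1 - Z ^ (-(a : ℤ)) * Z ^ i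
        = -Z ^ (-(a : ℤ)) * Z ^ i * (1 - Z ^ (a - i)) := by
      intro i hi
      have hZa : Z ^ (-(a : ℤ)) * Z ^ i * Z ^ (a - i) = 1 := by
        rw [mul_assoc, ← pow_add, Nat.add_sub_cancel' (by have := mem_range.1 hi; omega), zpow_neg,
          zpow_natCast, inv_mul_cancel₀ (pow_ne_zero a hZ)]
      linear_combination -hZa
    have hsign : (-Z ^ (-(a : ℤ))) ^ j * Z ^ j.choose 2
        = (-1) ^ j * Z ^ ((j.choose 2 : ℤ) - a * j) := by
      rw [neg_pow, mul_assoc, ← zpow_natCast (Z ^ _), ← zpow_mul,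
        ← zpow_natCast Z (j.choose 2), ← zpow_add₀ hZ]
      ring_nf
    rw [prod_congr rfl hfactor, prod_mul_distrib, prod_mul_distrib, prod_const, card_range,
      prod_pow_eq_pow_sum, sum_range_id, ← Nat.choose_two_right, ← gaussBinom_mul_qFactorial,
      hsign]

lemma sum_gaussBinom_sq_mul_zpow (hZ : Z ≠ 0) (a j : ℕ) :
    ∑ k ∈ range (a + 1), gaussBinom Z a k ^ 2 * Z ^ ((k.choose 2 : ℤ) - k * a) * (-1) ^ k *
        (if k ≤ j then (-1) ^ (j - k) * Z ^ (j - k).choose 2 * gaussBinom Z (a - k) (j - k)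
          else 0)
      = (-1) ^ j * Z ^ ((j.choose 2 : ℤ) - a * j) * gaussBinom Z a j *
          gaussBinom Z (a + j) j := by
  set term := fun k => gaussBinom Z a k ^ 2 * Z ^ ((k.choose 2 : ℤ) - k * a) * (-1) ^ k *
    (if k ≤ j then (-1) ^ (j - k) * Z ^ (j - k).choose 2 * gaussBinom Z (a - k) (j - k) else 0)
  have hrange : ∑ k ∈ range (a + 1), term k = ∑ k ∈ range (j + 1), term k := by
    rcases le_total a j with h | h
    · refine sum_subset (range_subset_range.2 (by omega)) fun k hk hka => ?_
      simp only [mem_range] at hk hka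
      simp only [term, gaussBinom_eq_zero_of_lt Z (show a < k by omega)]
      ring
    · refine (sum_subset (range_subset_range.2 (by omega)) fun k hk hkj => ?_).symm
      simp only [mem_range] at hk hkj
      simp only [term, if_neg (show ¬k ≤ j by omega), mul_zero]
  have hterm : ∀ k ∈ range (j + 1), term k = (-1) ^ j * Z ^ ((j.choose 2 : ℤ) - a * j) *
      gaussBinom Z a j * (gaussBinom Z a k * gaussBinom Z j (j - k) * Z ^ ((a - k) * (j - k))) := by
    intro k hk
    have hkj : k ≤ j := by have := mem_range.1 hk; omega
    rcases lt_or_ge a k with hak | hka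
    · simp only [term, gaussBinom_eq_zero_of_lt Z hak]
      ring
    have hsign : (-1 : F) ^ k * (-1) ^ (j - k) = (-1) ^ j := by
      rw [← pow_add, Nat.add_sub_cancel' hkj]
    have hexp : Z ^ ((k.choose 2 : ℤ) - k * a) * Z ^ (j - k).choose 2
        = Z ^ ((j.choose 2 : ℤ) - a * j) * Z ^ ((a - k) * (j - k)) := by
      rw [← zpow_natCast, ← zpow_natCast Z ((a - k) * (j - k)), ← zpow_add₀ hZ,
        ← zpow_add₀ hZ]
      congr 1
      conv_rhs => rw [← Nat.add_sub_cancel' hkj, Nat.choose_two_add, Nat.add_sub_cancel' hkj]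
      push_cast [hka, hkj]
      ring
    calc term k = ((-1) ^ k * (-1) ^ (j - k)) *
          (Z ^ ((k.choose 2 : ℤ) - k * a) * Z ^ (j - k).choose 2) *
          (gaussBinom Z a k * (gaussBinom Z a k * gaussBinom Z (a - k) (j - k))) := by
          simp only [term, if_pos hkj]; ring
      _ = _ := by
          rw [hsign, hexp, gaussBinom_mul_gaussBinom_sub Z hkj, gaussBinom_sub_right Z hkj]; ring
  rw [hrange, sum_congr rfl hterm, ← mul_sum, sum_gaussBinom_mul_gaussBinom]

end Field

section RootValue

variable {K : Type*} [Field K]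

/-- `A` has no pole at the root of `P`, and takes the value `u` there. -/
def HasRootValue (P : K[X]) [Fact (Irreducible P)] (A : RatFunc K) (u : AdjoinRoot P) : Prop :=
  ∃ f g : K[X], AdjoinRoot.mk P g ≠ 0 ∧
    A = algebraMap K[X] (RatFunc K) f / algebraMap K[X] (RatFunc K) g ∧
    u = AdjoinRoot.mk P f / AdjoinRoot.mk P g

lemma algebraMap_ne_zero_of_mk_ne_zero {P g : K[X]} (hg : AdjoinRoot.mk P g ≠ 0) :
    algebraMap K[X] (RatFunc K) g ≠ 0 :=
  fun h => hg (by
    rw [(map_eq_zero_iff _ (IsFractionRing.injective K[X] (RatFunc K))).1 h, map_zero])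

variable {P : K[X]} [Fact (Irreducible P)]

lemma hasRootValue_algebraMap (f : K[X]) :
    HasRootValue P (algebraMap K[X] (RatFunc K) f) (AdjoinRoot.mk P f) :=
  ⟨f, 1, by simp, by simp, by simp⟩

lemma hasRootValue_X : HasRootValue P RatFunc.X (AdjoinRoot.root P) := by
  simpa using hasRootValue_algebraMap (P := P) X

lemma hasRootValue_one : HasRootValue P 1 1 := by simpa using hasRootValue_algebraMap (P := P) 1

lemma hasRootValue_zero : HasRootValue P 0 0 := by simpa using hasRootValue_algebraMap (P := P) 0

namespace HasRootValue

variable {A B : RatFunc K} {u v : AdjoinRoot P}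

lemma add (hA : HasRootValue P A u) (hB : HasRootValue P B v) :
    HasRootValue P (A + B) (u + v) := by
  obtain ⟨f₁, g₁, hg₁, rfl, rfl⟩ := hA
  obtain ⟨f₂, g₂, hg₂, rfl, rfl⟩ := hB
  refine ⟨f₁ * g₂ + g₁ * f₂, g₁ * g₂, by simpa using mul_ne_zero hg₁ hg₂, ?_, ?_⟩
  · rw [div_add_div _ _ (algebraMap_ne_zero_of_mk_ne_zero hg₁)
      (algebraMap_ne_zero_of_mk_ne_zero hg₂)]
    simp
  · rw [div_add_div _ _ hg₁ hg₂]
    simp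

lemma mul (hA : HasRootValue P A u) (hB : HasRootValue P B v) :
    HasRootValue P (A * B) (u * v) := by
  obtain ⟨f₁, g₁, hg₁, rfl, rfl⟩ := hA
  obtain ⟨f₂, g₂, hg₂, rfl, rfl⟩ := hB
  exact ⟨f₁ * f₂, g₁ * g₂, by simpa using mul_ne_zero hg₁ hg₂, by simp [div_mul_div_comm],
    by simp [div_mul_div_comm]⟩

lemma neg (hA : HasRootValue P A u) : HasRootValue P (-A) (-u) := by
  obtain ⟨f, g, hg, rfl, rfl⟩ := hA
  exact ⟨-f, g, hg, by simp [neg_div], by simp [neg_div]⟩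

lemma sub (hA : HasRootValue P A u) (hB : HasRootValue P B v) :
    HasRootValue P (A - B) (u - v) := by
  simpa [sub_eq_add_neg] using hA.add hB.neg

lemma pow (hA : HasRootValue P A u) (n : ℕ) : HasRootValue P (A ^ n) (u ^ n) := by
  induction n with
  | zero => simpa using hasRootValue_one
  | succ n ih => simpa [pow_succ] using ih.mul hA

lemma inv (hA : HasRootValue P A u) (hu : u ≠ 0) : HasRootValue P A⁻¹ u⁻¹ := by
  obtain ⟨f, g, hg, rfl, rfl⟩ := hA
  exact ⟨g, f, (div_ne_zero_iff.1 hu).1, by rw [inv_div], by rw [inv_div]⟩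

lemma div (hA : HasRootValue P A u) (hB : HasRootValue P B v) (hv : v ≠ 0) :
    HasRootValue P (A / B) (u / v) := by
  simpa [div_eq_mul_inv] using hA.mul (hB.inv hv)

lemma zpow (hA : HasRootValue P A u) (hu : u ≠ 0) (n : ℤ) : HasRootValue P (A ^ n) (u ^ n) := by
  cases n with
  | ofNat n => simpa using hA.pow n
  | negSucc n => simpa using (hA.pow (n + 1)).inv (pow_ne_zero _ hu)

lemma sum {ι : Type*} (s : Finset ι) {A : ι → RatFunc K} {u : ι → AdjoinRoot P}
    (h : ∀ i ∈ s, HasRootValue P (A i) (u i)) :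
    HasRootValue P (∑ i ∈ s, A i) (∑ i ∈ s, u i) := by
  induction s using Finset.cons_induction with
  | empty => simpa using hasRootValue_zero
  | cons i s his ih =>
    simpa using (h i (mem_cons_self i s)).add (ih fun j hj => h j (mem_cons_of_mem hj))

lemma prod {ι : Type*} (s : Finset ι) {A : ι → RatFunc K} {u : ι → AdjoinRoot P}
    (h : ∀ i ∈ s, HasRootValue P (A i) (u i)) :
    HasRootValue P (∏ i ∈ s, A i) (∏ i ∈ s, u i) := by
  induction s using Finset.cons_induction with
  | empty => simpa using hasRootValue_one
  | cons i s his ih =>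
    simpa using (h i (mem_cons_self i s)).mul (ih fun j hj => h j (mem_cons_of_mem hj))

lemma gaussBinom (hA : HasRootValue P A u) (n k : ℕ) :
    HasRootValue P (_root_.gaussBinom A n k) (_root_.gaussBinom u n k) := by
  induction n generalizing k with
  | zero =>
    cases k with
    | zero => simpa using hasRootValue_one
    | succ k => exact hasRootValue_zero
  | succ n ih =>
    cases k with
    | zero => simpa using hasRootValue_one
    | succ k => exact (ih (k + 1)).add ((hA.pow _).mul (ih k))

end HasRootValue

end RootValue

instance {n : ℕ} [NeZero n] : Fact (Irreducible (cyclotomic n ℚ)) :=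
  ⟨cyclotomic.irreducible_rat (NeZero.pos n)⟩

lemma isPrimitiveRoot_root_cyclotomic (n : ℕ) [NeZero n] :
    IsPrimitiveRoot (AdjoinRoot.root (cyclotomic n ℚ)) n := by
  rw [← isRoot_cyclotomic_iff (R := AdjoinRoot (cyclotomic n ℚ)), ← map_cyclotomic n
    (AdjoinRoot.of (cyclotomic n ℚ))]
  exact AdjoinRoot.isRoot_root _

lemma modQ_of_hasRootValue_sub {p : ℕ} [Fact p.Prime] {A B : RatFunc ℚ}
    (h : HasRootValue (cyclotomic p ℚ) (A - B) 0) : ModQ 1 p A B := by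
  obtain ⟨f, g, hg, hAB, hfg⟩ := h
  obtain ⟨c, rfl⟩ := AdjoinRoot.mk_eq_zero.1 (div_eq_zero_iff.1 hfg.symm |>.resolve_right hg)
  have hcyc : cyclotomic p ℚ = ∑ i ∈ range p, X ^ i := cyclotomic_prime ℚ p
  refine ⟨c, g, fun hdvd => hg (AdjoinRoot.mk_eq_zero.2 (hcyc ▸ hdvd)), ?_⟩
  rw [hAB, div_mul_cancel₀ _ (algebraMap_ne_zero_of_mk_ne_zero hg), pow_one, map_mul, hcyc, qInt,
    map_sum]
  simp [q]

lemma dvd_add_mul_val_neg_div {p m : ℕ} [Fact p.Prime] (hpm : ¬ p ∣ m) (r : ℕ) :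
    p ∣ r + m * (-(r : ZMod p) / m).val := by
  have hm : (m : ZMod p) ≠ 0 := by rwa [Ne, ZMod.natCast_eq_zero_iff]
  rw [← ZMod.natCast_eq_zero_iff]
  push_cast
  rw [ZMod.natCast_zmod_val, mul_div_cancel₀ _ hm, add_neg_cancel]

noncomputable def qRVSeries (p m r : ℕ) : Polynomial (RatFunc ℚ) :=
  ∑ k ∈ range p, C (qPoch (q ^ r) (q ^ m) k * qPoch (q ^ ((m : ℤ) - r)) (q ^ m) k /
    qPoch (q ^ m) (q ^ m) k ^ 2) * X ^ k

noncomputable def qRVClosedForm (m a : ℕ) : Polynomial (RatFunc ℚ) :=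
  ∑ k ∈ range (a + 1),
    C (qBinom a k (q ^ m) ^ 2 * q ^ ((m * (k * (k - 1)) / 2 : ℕ) - (m : ℤ) * k * a)) * (-X) ^ k *
      ∏ i ∈ range (a - k), (1 - C ((q ^ m) ^ i) * X)

lemma coeff_qRVSeries (p m r j : ℕ) :
    (qRVSeries p m r).coeff j = if j < p then
      qPoch (q ^ r) (q ^ m) j * qPoch (q ^ ((m : ℤ) - r)) (q ^ m) j / qPoch (q ^ m) (q ^ m) j ^ 2
      else 0 := by
  simp [qRVSeries, finsetSum_coeff, coeff_X_pow]

lemma coeff_qRVClosedForm (m a j : ℕ) :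
    (qRVClosedForm m a).coeff j = ∑ k ∈ range (a + 1),
      qBinom a k (q ^ m) ^ 2 * q ^ ((m * (k * (k - 1)) / 2 : ℕ) - (m : ℤ) * k * a) * (-1) ^ k *
        (if k ≤ j then
          (-1) ^ (j - k) * (q ^ m) ^ (j - k).choose 2 * gaussBinom (q ^ m) (a - k) (j - k)
          else 0) := by
  rw [qRVClosedForm, finsetSum_coeff]
  refine sum_congr rfl fun k _ => ?_
  rw [coeff_C_mul_neg_X_pow_mul, coeff_prod_one_sub_C_pow_mul_X]

section Evaluation

variable {P : ℚ[X]} [Fact (Irreducible P)]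

lemma HasRootValue.qPoch {A Q : RatFunc ℚ} {u v : AdjoinRoot P} (hA : HasRootValue P A u)
    (hQ : HasRootValue P Q v) (n : ℕ) :
    HasRootValue P (qPoch A Q n) (∏ i ∈ range n, (1 - u * v ^ i)) :=
  HasRootValue.prod _ fun i _ => hasRootValue_one.sub (hA.mul (hQ.pow i))

lemma HasRootValue.qBinom {Q : RatFunc ℚ} {Z : AdjoinRoot P} (hQ : HasRootValue P Q Z) {n k : ℕ}
    (hk : k ≤ n) (hZ : qFactorial Z k ≠ 0) :
    HasRootValue P (qBinom n k Q) (_root_.gaussBinom Z n k) := by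
  have h := ((hQ.pow (n - k + 1)).qPoch hQ k).div (hQ.qPoch hQ k)
    (by rwa [prod_one_sub_mul_pow])
  rw [prod_one_sub_mul_pow, prod_one_sub_pow_mul_pow _ hk, mul_div_cancel_right₀ _ hZ] at h
  exact h

variable {p m r a : ℕ} {ζ Z : AdjoinRoot P} (hq : HasRootValue P q ζ) (hζ : ζ ≠ 0)
  (hZm : ζ ^ m = Z) (hZ : IsPrimitiveRoot Z p) (hap : a < p)
include hq hζ hZm hZ hap

lemma hasRootValue_coeff_qRVSeries (hra : ζ ^ r * Z ^ a = 1) (j : ℕ) :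
    HasRootValue P ((qRVSeries p m r).coeff j)
      ((-1) ^ j * Z ^ ((j.choose 2 : ℤ) - a * j) * gaussBinom Z a j *
        gaussBinom Z (a + j) j) := by
  subst hZm
  rw [coeff_qRVSeries]
  split_ifs with hjp
  · have hZ0 : ζ ^ m ≠ 0 := pow_ne_zero m hζ
    have hζr : ζ ^ r = (ζ ^ m) ^ (-(a : ℤ)) := by
      rw [zpow_neg, zpow_natCast]
      exact eq_inv_of_mul_eq_one_left hra
    have hζmr : ζ ^ ((m : ℤ) - r) = (ζ ^ m) ^ (a + 1) := by
      rw [zpow_sub₀ hζ, zpow_natCast, zpow_natCast, hζr, div_eq_mul_inv, zpow_neg, zpow_natCast,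
        inv_inv, pow_succ']
    have hD := hZ.qFactorial_ne_zero hjp
    have hprod : ∏ i ∈ range j, (1 - (ζ ^ m) ^ (a + 1) * (ζ ^ m) ^ i)
        = gaussBinom (ζ ^ m) (a + j) j * qFactorial (ζ ^ m) j := by
      simpa using prod_one_sub_pow_mul_pow (ζ ^ m) (Nat.le_add_left j a)
    have h := (((hζr ▸ hq.pow r).qPoch (hq.pow m) j).mul
      ((hζmr ▸ hq.zpow hζ _).qPoch (hq.pow m) j)).div
      (((hq.pow m).qPoch (hq.pow m) j).pow 2) (by rw [prod_one_sub_mul_pow]; exact pow_ne_zero 2 hD)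
    rw [prod_one_sub_mul_pow, prod_one_sub_zpow_neg_mul_pow hZ0, hprod] at h
    convert h using 1
    field_simp
  · simpa [gaussBinom_eq_zero_of_lt _ (show a < j by omega)] using hasRootValue_zero

lemma hasRootValue_coeff_qRVClosedForm (j : ℕ) :
    HasRootValue P ((qRVClosedForm m a).coeff j)
      (∑ k ∈ range (a + 1), gaussBinom Z a k ^ 2 * Z ^ ((k.choose 2 : ℤ) - k * a) * (-1) ^ k *
        (if k ≤ j then (-1) ^ (j - k) * Z ^ (j - k).choose 2 * gaussBinom Z (a - k) (j - k)
          else 0)) := by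
  subst hZm
  have hqm := hq.pow m
  have hsign (n : ℕ) : HasRootValue P ((-1) ^ n) ((-1) ^ n) := hasRootValue_one.neg.pow n
  rw [coeff_qRVClosedForm]
  refine HasRootValue.sum _ fun k hk => ?_
  have hka : k ≤ a := by have := mem_range.1 hk; omega
  have hexp : HasRootValue P (q ^ ((m * (k * (k - 1)) / 2 : ℕ) - (m : ℤ) * k * a))
      ((ζ ^ m) ^ ((k.choose 2 : ℤ) - k * a)) := by
    convert hq.zpow hζ _ using 1
    rw [Nat.mul_mul_pred_div_two, ← zpow_natCast ζ m, ← zpow_mul]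
    push_cast
    ring_nf
  refine ((((hqm.qBinom hka (hZ.qFactorial_ne_zero (by omega))).pow 2).mul hexp).mul
    (hsign k)).mul ?_
  split_ifs
  · exact ((hsign _).mul (hqm.pow _)).mul (hqm.gaussBinom _ _)
  · exact hasRootValue_zero

end Evaluation

theorem q_rv_general_closed_general (p m r : ℕ) [Fact p.Prime] (hpm : ¬ p ∣ m)
    (a : ℕ) (ha : a = ZMod.val (-(r : ZMod p) / (m : ZMod p))) :
    ∀ j : ℕ, ModQ 1 p
      ((∑ k ∈ Finset.range p,
          Polynomial.C (qPoch (q ^ r) (q ^ m) k * qPoch (q ^ ((m : ℤ) - r)) (q ^ m) k /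
              qPoch (q ^ m) (q ^ m) k ^ 2) *
            Polynomial.X ^ k : Polynomial (RatFunc ℚ)).coeff j)
      ((∑ k ∈ Finset.range (a + 1),
          Polynomial.C (qBinom a k (q ^ m) ^ 2 *
              q ^ ((m * (k * (k - 1)) / 2 : ℕ) - (m : ℤ) * k * a)) *
            (-Polynomial.X) ^ k *
            ∏ i ∈ Finset.range (a - k),
              (1 - Polynomial.C ((q ^ m) ^ i) * Polynomial.X) :
          Polynomial (RatFunc ℚ)).coeff j) := by
  intro j
  change ModQ 1 p ((qRVSeries p m r).coeff j) ((qRVClosedForm m a).coeff j)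
  have hp : p.Prime := Fact.out
  set ζ := AdjoinRoot.root (cyclotomic p ℚ)
  have hζ : IsPrimitiveRoot ζ p := isPrimitiveRoot_root_cyclotomic p
  have hζ0 : ζ ≠ 0 := hζ.ne_zero hp.ne_zero
  have hZ : IsPrimitiveRoot (ζ ^ m) p := hζ.pow_of_coprime m (hp.coprime_iff_not_dvd.2 hpm).symm
  have hap : a < p := ha ▸ ZMod.val_lt _
  have hra : ζ ^ r * (ζ ^ m) ^ a = 1 := by
    rw [← pow_mul, ← pow_add, hζ.pow_eq_one_iff_dvd, ha]
    exact dvd_add_mul_val_neg_div hpm r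
  refine modQ_of_hasRootValue_sub ?_
  have h := (hasRootValue_coeff_qRVSeries hasRootValue_X hζ0 rfl hZ hap hra j).sub
    (hasRootValue_coeff_qRVClosedForm hasRootValue_X hζ0 rfl hZ hap j)
  rwa [sum_gaussBinom_sq_mul_zpow (pow_ne_zero m hζ0), sub_self] at h

/-- Theorem 3.4: coefficientwise in `x` mod `[p]`, with `a = ⟨-r/m⟩_p`,
`∑_{k<p} (q^r;q^m)_k (q^{m-r};q^m)_k x^k / (q^m;q^m)_k²
 ≡ ∑_{k≤a} qbinom(a,k;q^m)² q^{mk(k-1)/2 - mka} (-x)^k (x;q^m)_{a-k}`. -/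
theorem q_rv_general_closed (p m r : ℕ) [Fact p.Prime] (hodd : Odd p)
    (hm : 0 < m) (hr : 0 < r) (hpm : ¬ p ∣ m)
    (a : ℕ) (ha : a = ZMod.val (-(r : ZMod p) / (m : ZMod p))) :
    ∀ j : ℕ, ModQ 1 p
      ((∑ k ∈ Finset.range p,
          Polynomial.C (qPoch (q ^ r) (q ^ m) k * qPoch (q ^ ((m : ℤ) - r)) (q ^ m) k /
              qPoch (q ^ m) (q ^ m) k ^ 2) *
            Polynomial.X ^ k : Polynomial (RatFunc ℚ)).coeff j)
      ((∑ k ∈ Finset.range (a + 1),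
          Polynomial.C (qBinom a k (q ^ m) ^ 2 *
              q ^ ((m * (k * (k - 1)) / 2 : ℕ) - (m : ℤ) * k * a)) *
            (-Polynomial.X) ^ k *
            ∏ i ∈ Finset.range (a - k),
              (1 - Polynomial.C ((q ^ m) ^ i) * Polynomial.X) :
          Polynomial (RatFunc ℚ)).coeff j) :=
  q_rv_general_closed_general p m r hpm a ha
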